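/- arXiv:0912.2315 — 4 statements merged into one kernel-verified Lean document; each statement's English description precedes it below -/
import Mathlib

section
/- Let A ⊆ B(X) be an abelian, unital, norm-closed algebra of operators on a Banach space X such that X = X₁ ⊕ X₂ where X₁ = Ax₁ and X₂ = Ax₂ are closed subspaces for some x₁, x₂ ∈ X. Let I₁ = {a ∈ A : ax₁ = 0} and I₂ = {a ∈ A : ax₂ = 0}. Then I₁ + I₂ is a closed subspace of A. -/
/-!
The map `A × A → X`, `(u, v) ↦ u x₁ + v x₂`, is onto, so by the open mapping theorem every `y`
can be written `y = u x₁ + v x₂` with `‖v‖ ≤ C ‖y‖`. If `a x₁ = 0` and `b x₂ = 0`, commutativity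
gives `a y = u (a x₁) + v (a x₂) = v ((a + b) x₂)`, hence `‖a‖ ≤ C ‖x₂‖ ‖a + b‖`. This estimate
makes `(a, b) ↦ a + b` antilipschitz on the complete space `I₁ × I₂`, so its range `I₁ + I₂`
is closed.
-/

open NNReal

theorem Submodule.isClosed_sup_of_norm_le {R E : Type*} [Ring R] [NormedAddCommGroup E]
    [Module R E] [CompleteSpace E] {S T : Submodule R E} (hS : IsClosed (S : Set E))
    (hT : IsClosed (T : Set E)) {K : ℝ≥0} (h : ∀ s ∈ S, ∀ t ∈ T, ‖s‖ ≤ K * ‖s + t‖) :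
    IsClosed ((S ⊔ T : Submodule R E) : Set E) := by
  have := hS.completeSpace_coe
  have := hT.completeSpace_coe
  let f : S × T →L[R] E := S.subtypeL.coprod T.subtypeL
  have hbound : ∀ p : S × T, ‖p‖ ≤ ↑(K + 1) * ‖f p‖ := by
    rintro ⟨⟨s, hs⟩, ⟨t, ht⟩⟩
    change ‖((⟨s, hs⟩, ⟨t, ht⟩) : S × T)‖ ≤ (K + 1) * ‖s + t‖
    have hs' : ‖s‖ ≤ K * ‖s + t‖ := h s hs t ht
    have ht' : ‖t‖ ≤ ‖s + t‖ + ‖s‖ := by simpa using norm_sub_le (s + t) s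
    refine norm_prod_le_iff.2 ⟨?_, ?_⟩ <;> dsimp only [Submodule.coe_norm] <;>
      linarith [norm_nonneg (s + t)]
  have hrange : Set.range f = ((S ⊔ T : Submodule R E) : Set E) := by
    ext x
    simp [f, Submodule.mem_sup]
  rw [← hrange]
  exact (f.antilipschitz_of_bound hbound).isClosed_range f.uniformContinuous

section OperatorAlgebra

variable {𝕜 X : Type*} [NontriviallyNormedField 𝕜] [NormedAddCommGroup X] [NormedSpace 𝕜 X]
  {A : Subalgebra 𝕜 (X →L[𝕜] X)}

variable (A) in
noncomputable def annihilatorIn (x : X) : Submodule 𝕜 (X →L[𝕜] X) :=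
  Subalgebra.toSubmodule A ⊓ LinearMap.ker (ContinuousLinearMap.apply 𝕜 X x : (X →L[𝕜] X) →ₗ[𝕜] X)

theorem mem_annihilatorIn {a : X →L[𝕜] X} {x : X} : a ∈ annihilatorIn A x ↔ a ∈ A ∧ a x = 0 :=
  Iff.rfl

theorem isClosed_annihilatorIn (hA : IsClosed (A : Set (X →L[𝕜] X))) (x : X) :
    IsClosed (annihilatorIn A x : Set (X →L[𝕜] X)) :=
  hA.inter (ContinuousLinearMap.isClosed_ker _)

theorem exists_decomposition_norm_le [CompleteSpace X] (hA : IsClosed (A : Set (X →L[𝕜] X)))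
    {x₁ x₂ : X} (hspan : ∀ y : X, ∃ a ∈ A, ∃ b ∈ A, y = a x₁ + b x₂) :
    ∃ C : ℝ≥0, ∀ y : X, ∃ u ∈ A, ∃ v ∈ A, y = u x₁ + v x₂ ∧ ‖v‖ ≤ C * ‖y‖ := by
  let E := Subalgebra.toSubmodule A
  have : CompleteSpace E := hA.completeSpace_coe
  let Φ : E × E →L[𝕜] X := ((ContinuousLinearMap.apply 𝕜 X x₁).comp E.subtypeL).coprod
    ((ContinuousLinearMap.apply 𝕜 X x₂).comp E.subtypeL)
  have hΦ : Function.Surjective Φ := fun y => by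
    obtain ⟨u, hu, v, hv, rfl⟩ := hspan y
    exact ⟨(⟨u, hu⟩, ⟨v, hv⟩), rfl⟩
  obtain ⟨C, hCpos, hC⟩ := Φ.exists_preimage_norm_le hΦ
  refine ⟨⟨C, hCpos.le⟩, fun y => ?_⟩
  obtain ⟨⟨u, v⟩, rfl, hnorm⟩ := hC y
  exact ⟨u, u.2, v, v.2, rfl, (norm_snd_le _).trans hnorm⟩

theorem norm_le_of_forall_decomposition (hcomm : ∀ a ∈ A, ∀ b ∈ A, a * b = b * a)
    {x₁ x₂ : X} {C : ℝ≥0} (hC : ∀ y : X, ∃ u ∈ A, ∃ v ∈ A, y = u x₁ + v x₂ ∧ ‖v‖ ≤ C * ‖y‖)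
    {a b : X →L[𝕜] X} (ha : a ∈ annihilatorIn A x₁) (hb : b ∈ annihilatorIn A x₂) :
    ‖a‖ ≤ ↑(C * ‖x₂‖₊) * ‖a + b‖ := by
  obtain ⟨haA, ha₁⟩ := mem_annihilatorIn.1 ha
  obtain ⟨-, hb₂⟩ := mem_annihilatorIn.1 hb
  refine ContinuousLinearMap.opNorm_le_bound _ (by positivity) fun y => ?_
  obtain ⟨u, hu, v, hv, rfl, hvy⟩ := hC y
  have hay : a (u x₁ + v x₂) = v ((a + b) x₂) := by
    have hau : a (u x₁) = u (a x₁) := congrArg (· x₁) (hcomm a haA u hu)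
    have hav : a (v x₂) = v (a x₂) := congrArg (· x₂) (hcomm a haA v hv)
    simp [hau, hav, ha₁, hb₂]
  calc ‖a (u x₁ + v x₂)‖ = ‖v ((a + b) x₂)‖ := by rw [hay]
    _ ≤ ‖v‖ * (‖a + b‖ * ‖x₂‖) := v.le_opNorm_of_le ((a + b).le_opNorm x₂)
    _ ≤ C * ‖u x₁ + v x₂‖ * (‖a + b‖ * ‖x₂‖) := by gcongr
    _ = ↑(C * ‖x₂‖₊) * ‖a + b‖ * ‖u x₁ + v x₂‖ := by push_cast; ring

end OperatorAlgebra

theorem stmt1_general {X : Type*} [NormedAddCommGroup X] [NormedSpace ℂ X] [CompleteSpace X]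
    (A : Subalgebra ℂ (X →L[ℂ] X))
    (hA : IsClosed (A : Set (X →L[ℂ] X)))
    (hcomm : ∀ a ∈ A, ∀ b ∈ A, a * b = b * a)
    (x₁ x₂ : X)
    (hspan : ∀ y : X, ∃ a ∈ A, ∃ b ∈ A, y = a x₁ + b x₂) :
    IsClosed {c : X →L[ℂ] X | ∃ a ∈ A, ∃ b ∈ A, a x₁ = 0 ∧ b x₂ = 0 ∧ c = a + b} := by
  obtain ⟨C, hC⟩ := exists_decomposition_norm_le hA hspan
  have hsup := Submodule.isClosed_sup_of_norm_le (isClosed_annihilatorIn hA x₁)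
    (isClosed_annihilatorIn hA x₂) fun a ha b hb => norm_le_of_forall_decomposition hcomm hC ha hb
  refine (congrArg IsClosed (Set.ext fun c => ?_)).mpr hsup
  simp only [Set.mem_ofPred_eq, SetLike.mem_coe, Submodule.mem_sup, mem_annihilatorIn]
  constructor
  · rintro ⟨a, ha, b, hb, ha₁, hb₂, rfl⟩
    exact ⟨a, ⟨ha, ha₁⟩, b, ⟨hb, hb₂⟩, rfl⟩
  · rintro ⟨a, ⟨ha, ha₁⟩, b, ⟨hb, hb₂⟩, rfl⟩
    exact ⟨a, ha, b, hb, ha₁, hb₂, rfl⟩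

/-- If `A ⊆ B(X)` is an abelian, unital, norm-closed operator algebra on a Banach
space `X` with `X = Ax₁ ⊕ Ax₂` (both orbits closed), then `I₁ + I₂` is closed,
where `Iⱼ = {a ∈ A : a xⱼ = 0}`. -/
theorem stmt1 {X : Type*} [NormedAddCommGroup X] [NormedSpace ℂ X] [CompleteSpace X]
    (A : Subalgebra ℂ (X →L[ℂ] X))
    (hA : IsClosed (A : Set (X →L[ℂ] X)))
    (hcomm : ∀ a ∈ A, ∀ b ∈ A, a * b = b * a)
    (x₁ x₂ : X)
    (hc1 : IsClosed {y : X | ∃ a ∈ A, a x₁ = y})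
    (hc2 : IsClosed {y : X | ∃ a ∈ A, a x₂ = y})
    (hspan : ∀ y : X, ∃ a ∈ A, ∃ b ∈ A, y = a x₁ + b x₂)
    (hind : ∀ a ∈ A, ∀ b ∈ A, a x₁ + b x₂ = 0 → a x₁ = 0 ∧ b x₂ = 0) :
    IsClosed {c : X →L[ℂ] X | ∃ a ∈ A, ∃ b ∈ A, a x₁ = 0 ∧ b x₂ = 0 ∧ c = a + b} :=
  stmt1_general A hA hcomm x₁ x₂ hspan
end

section
/- Let A ⊆ B(X) be an abelian, unital, norm-closed subalgebra of split strict multiplicity 2, with X = Ax₁ ⊕ Ax₂. Then the diagonal subspace D₂ = {ax₁ ⊕ ax₂ : a ∈ A} is a closed subspace of X. -/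
/-!
Write `Aᵢ = A xᵢ`. Since `A₁` and `A₂` are closed and `X = A₁ ⊕ A₂`, the projections onto them
are bounded, and by the open mapping theorem every `y ∈ X` is `b x₁ + c x₂` with `b, c ∈ A` of
norm `O(‖y‖)`. Commutativity gives `a y = b (a x₁) + c (a x₂)`, hence
`‖a‖ ≲ ‖a x₁‖ + ‖a x₂‖ ≲ ‖a x₁ + a x₂‖`. So `a ↦ a x₁ + a x₂` is bounded below on the Banach
space `A`, and its range, the diagonal, is closed.
-/

open ContinuousLinearMap Function

section Banach

variable {𝕜 E F : Type*} [NontriviallyNormedField 𝕜]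
  [NormedAddCommGroup E] [NormedSpace 𝕜 E] [NormedAddCommGroup F] [NormedSpace 𝕜 F]

theorem Submodule.IsTopCompl.exists_norm_add_norm_le {p q : Submodule 𝕜 E} (h : IsTopCompl p q) :
    ∃ M, 0 ≤ M ∧ ∀ u ∈ p, ∀ v ∈ q, ‖u‖ + ‖v‖ ≤ M * ‖u + v‖ := by
  refine ⟨‖p.projectionL q h‖ + ‖q.projectionL p h.symm‖, by positivity, fun u hu v hv => ?_⟩
  have hpu : p.projectionL q h (u + v) = u := by
    rw [map_add, projectionL_apply_left h ⟨u, hu⟩, projectionL_apply_right h ⟨v, hv⟩, add_zero]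
  have hqv : q.projectionL p h.symm (u + v) = v := by
    rw [map_add, projectionL_apply_right h.symm ⟨u, hu⟩, projectionL_apply_left h.symm ⟨v, hv⟩,
      zero_add]
  calc ‖u‖ + ‖v‖ = ‖p.projectionL q h (u + v)‖ + ‖q.projectionL p h.symm (u + v)‖ := by
        rw [hpu, hqv]
    _ ≤ ‖p.projectionL q h‖ * ‖u + v‖ + ‖q.projectionL p h.symm‖ * ‖u + v‖ :=
        add_le_add (le_opNorm _ _) (le_opNorm _ _)
    _ = _ := (add_mul _ _ _).symm

namespace ContinuousLinearMap

theorem opNorm_le_of_forall_eq_apply_add_apply {a : E →L[𝕜] E} {x₁ x₂ : E} {C : ℝ}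
    (hC : 0 ≤ C) (h : ∀ y, ∃ b c : E →L[𝕜] E, Commute a b ∧ Commute a c ∧ b x₁ + c x₂ = y ∧
      ‖b‖ ≤ C * ‖y‖ ∧ ‖c‖ ≤ C * ‖y‖) :
    ‖a‖ ≤ C * (‖a x₁‖ + ‖a x₂‖) := by
  refine opNorm_le_bound _ (by positivity) fun y => ?_
  obtain ⟨b, c, hab, hac, rfl, hb, hc⟩ := h y
  have hay : a (b x₁ + c x₂) = b (a x₁) + c (a x₂) := by
    rw [map_add]
    exact congr($(DFunLike.congr_fun hab.eq x₁) + $(DFunLike.congr_fun hac.eq x₂))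
  calc ‖a (b x₁ + c x₂)‖ ≤ ‖b‖ * ‖a x₁‖ + ‖c‖ * ‖a x₂‖ := by
        rw [hay]; exact norm_add_le_of_le (le_opNorm _ _) (le_opNorm _ _)
    _ ≤ C * ‖b x₁ + c x₂‖ * ‖a x₁‖ + C * ‖b x₁ + c x₂‖ * ‖a x₂‖ := by gcongr
    _ = C * (‖a x₁‖ + ‖a x₂‖) * ‖b x₁ + c x₂‖ := by ring

variable [CompleteSpace E] {S : Submodule 𝕜 E}

theorem exists_preimage_norm_le_of_isClosed_image [CompleteSpace F] (f : E →L[𝕜] F)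
    (hS : IsClosed (S : Set E)) (hfS : IsClosed (f '' S)) :
    ∃ C > 0, ∀ y ∈ f '' S, ∃ s ∈ S, f s = y ∧ ‖s‖ ≤ C * ‖y‖ := by
  have := hS.completeSpace_coe
  have : CompleteSpace (S.map (f : E →ₗ[𝕜] F)) := hfS.completeSpace_coe
  let g : S →L[𝕜] S.map (f : E →ₗ[𝕜] F) :=
    (f.comp S.subtypeL).codRestrict _ fun s => Submodule.mem_map_of_mem s.2
  have hg : Surjective g := by
    rintro ⟨_, s, hs, rfl⟩
    exact ⟨⟨s, hs⟩, rfl⟩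
  obtain ⟨C, hC, hpre⟩ := g.exists_preimage_norm_le hg
  refine ⟨C, hC, ?_⟩
  rintro _ ⟨s, hs, rfl⟩
  obtain ⟨t, hgt, ht⟩ := hpre ⟨f s, s, hs, rfl⟩
  exact ⟨t, t.2, congrArg Subtype.val hgt, ht⟩

theorem isClosed_image_of_norm_le (f : E →L[𝕜] F) (hS : IsClosed (S : Set E)) {K : ℝ}
    (hK : ∀ s ∈ S, ‖s‖ ≤ K * ‖f s‖) : IsClosed (f '' S) := by
  have := hS.completeSpace_coe
  have hanti : AntilipschitzWith K.toNNReal (f.comp S.subtypeL) :=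
    (f.comp S.subtypeL).antilipschitz_of_bound fun s =>
      (hK s s.2).trans (mul_le_mul_of_nonneg_right (Real.le_coe_toNNReal K) (norm_nonneg _))
  have hrange : Set.range (f.comp S.subtypeL) = f '' S := by
    rw [coe_comp, Submodule.coe_subtypeL, Submodule.coe_subtype, Set.range_comp,
      Subtype.range_coe]
  exact hrange ▸ hanti.isClosed_range (f.comp S.subtypeL).uniformContinuous

end ContinuousLinearMap

end Banach

namespace Subalgebra

variable {𝕜 E : Type*} [NontriviallyNormedField 𝕜] [NormedAddCommGroup E] [NormedSpace 𝕜 E]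
  (A : Subalgebra 𝕜 (E →L[𝕜] E))

noncomputable def cyclicSubmodule (x : E) : Submodule 𝕜 E :=
  A.toSubmodule.map (apply 𝕜 E x : (E →L[𝕜] E) →ₗ[𝕜] E)

variable {A}

theorem mem_cyclicSubmodule {x y : E} : y ∈ A.cyclicSubmodule x ↔ ∃ a ∈ A, a x = y :=
  Iff.rfl

theorem coe_cyclicSubmodule (x : E) :
    (A.cyclicSubmodule x : Set E) = {y | ∃ a ∈ A, a x = y} :=
  rfl

variable [CompleteSpace E] {x₁ x₂ : E}

theorem isTopCompl_cyclicSubmodule (hc₁ : IsClosed (A.cyclicSubmodule x₁ : Set E))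
    (hc₂ : IsClosed (A.cyclicSubmodule x₂ : Set E))
    (hspan : ∀ y : E, ∃ a ∈ A, ∃ b ∈ A, y = a x₁ + b x₂)
    (hind : ∀ a ∈ A, ∀ b ∈ A, a x₁ + b x₂ = 0 → a x₁ = 0 ∧ b x₂ = 0) :
    Submodule.IsTopCompl (A.cyclicSubmodule x₁) (A.cyclicSubmodule x₂) := by
  refine Submodule.IsCompl.isTopCompl_of_isClosed ⟨?_, ?_⟩ hc₁ hc₂
  · rw [Submodule.disjoint_def]
    intro y hy₁ hy₂
    obtain ⟨a, ha, rfl⟩ := mem_cyclicSubmodule.1 hy₁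
    obtain ⟨b, hb, hba⟩ := mem_cyclicSubmodule.1 hy₂
    refine (hind a ha (-b) (neg_mem hb) ?_).1
    rw [neg_apply, hba, add_neg_cancel]
  · rw [codisjoint_iff, Submodule.eq_top_iff']
    intro y
    obtain ⟨a, ha, b, hb, rfl⟩ := hspan y
    exact Submodule.add_mem_sup ⟨a, ha, rfl⟩ ⟨b, hb, rfl⟩

theorem exists_forall_eq_apply_add_apply_norm_le (hA : IsClosed (A : Set (E →L[𝕜] E)))
    (h : Submodule.IsTopCompl (A.cyclicSubmodule x₁) (A.cyclicSubmodule x₂)) :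
    ∃ C, 0 ≤ C ∧ ∀ y, ∃ b ∈ A, ∃ c ∈ A, b x₁ + c x₂ = y ∧ ‖b‖ ≤ C * ‖y‖ ∧ ‖c‖ ≤ C * ‖y‖ := by
  obtain ⟨M, hM, hsplit⟩ := h.exists_norm_add_norm_le
  obtain ⟨C₁, hC₁, hpre₁⟩ :=
    (apply 𝕜 E x₁).exists_preimage_norm_le_of_isClosed_image hA h.isClosed
  obtain ⟨C₂, hC₂, hpre₂⟩ :=
    (apply 𝕜 E x₂).exists_preimage_norm_le_of_isClosed_image hA h.isClosed'
  refine ⟨(C₁ + C₂) * M, by positivity, fun y => ?_⟩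
  have hy : y ∈ A.cyclicSubmodule x₁ ⊔ A.cyclicSubmodule x₂ :=
    h.isCompl.sup_eq_top ▸ Submodule.mem_top
  obtain ⟨u, hu, v, hv, rfl⟩ := Submodule.mem_sup.1 hy
  obtain ⟨b, hb, hbu, hbn⟩ := hpre₁ u hu
  obtain ⟨c, hc, hcv, hcn⟩ := hpre₂ v hv
  have huv := hsplit u hu v hv
  refine ⟨b, hb, c, hc, by rw [← hbu, ← hcv]; rfl, ?_, ?_⟩
  · calc ‖b‖ ≤ C₁ * ‖u‖ := hbn
      _ ≤ (C₁ + C₂) * (M * ‖u + v‖) := by gcongr <;> linarith [norm_nonneg v]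
      _ = _ := by ring
  · calc ‖c‖ ≤ C₂ * ‖v‖ := hcn
      _ ≤ (C₁ + C₂) * (M * ‖u + v‖) := by gcongr <;> linarith [norm_nonneg u]
      _ = _ := by ring

theorem exists_norm_le_norm_apply_add_apply (hA : IsClosed (A : Set (E →L[𝕜] E)))
    (hcomm : ∀ a ∈ A, ∀ b ∈ A, a * b = b * a)
    (h : Submodule.IsTopCompl (A.cyclicSubmodule x₁) (A.cyclicSubmodule x₂)) :
    ∃ K, ∀ a ∈ A, ‖a‖ ≤ K * ‖a x₁ + a x₂‖ := by
  obtain ⟨M, -, hsplit⟩ := h.exists_norm_add_norm_le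
  obtain ⟨C, hC, hdec⟩ := exists_forall_eq_apply_add_apply_norm_le hA h
  refine ⟨C * M, fun a ha => ?_⟩
  have hdec_a : ∀ y, ∃ b c : E →L[𝕜] E, Commute a b ∧ Commute a c ∧ b x₁ + c x₂ = y ∧
      ‖b‖ ≤ C * ‖y‖ ∧ ‖c‖ ≤ C * ‖y‖ := fun y => by
    obtain ⟨b, hb, c, hc, hy, hbn, hcn⟩ := hdec y
    exact ⟨b, c, hcomm a ha b hb, hcomm a ha c hc, hy, hbn, hcn⟩
  calc ‖a‖ ≤ C * (‖a x₁‖ + ‖a x₂‖) := opNorm_le_of_forall_eq_apply_add_apply hC hdec_a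
    _ ≤ C * (M * ‖a x₁ + a x₂‖) := by gcongr; exact hsplit _ ⟨a, ha, rfl⟩ _ ⟨a, ha, rfl⟩
    _ = C * M * ‖a x₁ + a x₂‖ := by ring

end Subalgebra

/-- If `A ⊆ B(X)` is an abelian, unital, norm-closed operator algebra with
split strict multiplicity 2, `X = Ax₁ ⊕ Ax₂`, then the diagonal
`D₂ = {a x₁ ⊕ a x₂ : a ∈ A}` is closed in `X`. -/
theorem stmt3 {X : Type*} [NormedAddCommGroup X] [NormedSpace ℂ X] [CompleteSpace X]
    (A : Subalgebra ℂ (X →L[ℂ] X))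
    (hA : IsClosed (A : Set (X →L[ℂ] X)))
    (hcomm : ∀ a ∈ A, ∀ b ∈ A, a * b = b * a)
    (x₁ x₂ : X)
    (hc1 : IsClosed {y : X | ∃ a ∈ A, a x₁ = y})
    (hc2 : IsClosed {y : X | ∃ a ∈ A, a x₂ = y})
    (hspan : ∀ y : X, ∃ a ∈ A, ∃ b ∈ A, y = a x₁ + b x₂)
    (hind : ∀ a ∈ A, ∀ b ∈ A, a x₁ + b x₂ = 0 → a x₁ = 0 ∧ b x₂ = 0) :
    IsClosed {y : X | ∃ a ∈ A, y = a x₁ + a x₂} := by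
  rw [← Subalgebra.coe_cyclicSubmodule] at hc1 hc2
  have hcompl := Subalgebra.isTopCompl_cyclicSubmodule hc1 hc2 hspan hind
  obtain ⟨K, hK⟩ := Subalgebra.exists_norm_le_norm_apply_add_apply hA hcomm hcompl
  have hclosed :=
    (apply ℂ X x₁ + apply ℂ X x₂).isClosed_image_of_norm_le (S := A.toSubmodule) hA hK
  convert hclosed using 1
  ext y
  exact exists_congr fun a => and_congr_right fun _ => eq_comm
end

section
/- Let A ⊆ B(X) be an abelian, unital, norm-closed subalgebra with split strict multiplicity p (X = Ax₁ ⊕ ··· ⊕ Ax_p, all Axⱼ closed), and let M ⊆ A be a maximal ideal. Then for each j the subspace M·xⱼ = {m xⱼ : m ∈ M} is a closed subspace of X. -/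
/-!
Let `f : A →L[ℂ] X` be evaluation at `xⱼ`. Its range `A xⱼ` is closed, so by the open mapping
theorem `f` is a quotient map onto it, and `f(S)` is closed for every subspace `S` with `S + ker f`
closed. Here `ker f` is the left ideal `Iⱼ = Ideal.torsionOf A X xⱼ`, and `M + Iⱼ` is closed
because maximality forces it to be `M` or `A`, while maximal ideals of a Banach algebra are closed.
-/

open Set

theorem ContinuousLinearMap.isClosed_image_of_isClosed_sup_ker {𝕜 E F : Type*}
    [NontriviallyNormedField 𝕜] [NormedAddCommGroup E] [NormedSpace 𝕜 E] [CompleteSpace E]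
    [NormedAddCommGroup F] [NormedSpace 𝕜 F] [CompleteSpace F] {f : E →L[𝕜] F}
    (hf : IsClosed (range f)) {S : Submodule 𝕜 E}
    (hS : IsClosed ((S ⊔ LinearMap.ker (f : E →ₗ[𝕜] F) : Submodule 𝕜 E) : Set E)) :
    IsClosed (f '' S) := by
  have hrange : IsClosed ((f : E →ₗ[𝕜] F).range : Set F) := by rwa [LinearMap.coe_range]
  have : CompleteSpace (f : E →ₗ[𝕜] F).range := hrange.completeSpace_coe
  set g := f.rangeRestrict
  have hg : Topology.IsQuotientMap g := g.isQuotientMap (LinearMap.surjective_rangeRestrict _)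
  have hker : LinearMap.ker (g : E →ₗ[𝕜] (f : E →ₗ[𝕜] F).range) = LinearMap.ker (f : E →ₗ[𝕜] F) :=
    LinearMap.ker_rangeRestrict _
  have hsat : g ⁻¹' (g '' S) = (S ⊔ LinearMap.ker (f : E →ₗ[𝕜] F) : Submodule 𝕜 E) := by
    rw [← hker, ← Submodule.comap_map_eq]; rfl
  have hgS : IsClosed (g '' S) := by rwa [← hg.isClosed_preimage, hsat]
  have himage : f '' S = Subtype.val '' (g '' S) := by rw [image_image]; rfl
  rw [himage]
  exact hrange.isClosedEmbedding_subtypeVal.isClosedMap _ hgS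

theorem Ideal.IsMaximal.isClosed_sup {R : Type*} [NormedRing R] [HasSummableGeomSeries R]
    {M : Ideal R} (hM : M.IsMaximal) (I : Ideal R) : IsClosed ((M ⊔ I : Ideal R) : Set R) := by
  rcases hM.out.le_iff.mp (le_sup_left : M ≤ M ⊔ I) with h | h
  · rw [h]; exact isClosed_univ
  · rw [h]; exact Ideal.IsMaximal.isClosed

theorem stmt5_general {X : Type*} [NormedAddCommGroup X] [NormedSpace ℂ X] [CompleteSpace X]
    (A : Subalgebra ℂ (X →L[ℂ] X))
    (hA : IsClosed (A : Set (X →L[ℂ] X)))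
    (p : ℕ) (x : Fin p → X)
    (hc : ∀ j, IsClosed {y : X | ∃ a ∈ A, a (x j) = y})
    (M : Ideal ↥A) (hM : M.IsMaximal) :
    ∀ j, IsClosed {y : X | ∃ m ∈ M, ((m : X →L[ℂ] X)) (x j) = y} := by
  intro j
  have : CompleteSpace A := hA.completeSpace_coe
  let f : A →L[ℂ] X := (ContinuousLinearMap.apply ℂ X (x j)).comp A.valA.toContinuousLinearMap
  have hrange : range f = {y : X | ∃ a ∈ A, a (x j) = y} := by
    ext y; simp [f]
  have himage : {y : X | ∃ m ∈ M, ((m : X →L[ℂ] X)) (x j) = y} = f '' (M.restrictScalars ℂ) := by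
    ext y; simp [f]
  have hsup : ((M.restrictScalars ℂ ⊔ LinearMap.ker (f : A →ₗ[ℂ] X) : Submodule ℂ A) : Set A) =
      (M ⊔ Ideal.torsionOf A X (x j) : Ideal A) := by
    simp only [Submodule.coe_sup]; rfl
  rw [himage]
  exact f.isClosed_image_of_isClosed_sup_ker (hrange ▸ hc j) (hsup ▸ hM.isClosed_sup _)

/-- If `A ⊆ B(X)` is an abelian, unital, norm-closed operator algebra with split
strict multiplicity `p` and `M ⊆ A` is a maximal ideal, then each subspace
`M xⱼ = {m xⱼ : m ∈ M}` is closed in `X`. -/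
theorem stmt5 {X : Type*} [NormedAddCommGroup X] [NormedSpace ℂ X] [CompleteSpace X]
    (A : Subalgebra ℂ (X →L[ℂ] X))
    (hA : IsClosed (A : Set (X →L[ℂ] X)))
    (hcomm : ∀ a ∈ A, ∀ b ∈ A, a * b = b * a)
    (p : ℕ) (x : Fin p → X)
    (hc : ∀ j, IsClosed {y : X | ∃ a ∈ A, a (x j) = y})
    (hspan : ∀ y : X, ∃ f : Fin p → (X →L[ℂ] X), (∀ j, f j ∈ A) ∧ y = ∑ j, f j (x j))
    (hind : ∀ f : Fin p → (X →L[ℂ] X), (∀ j, f j ∈ A) →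
      (∑ j, f j (x j)) = 0 → ∀ j, f j (x j) = 0)
    (M : Ideal ↥A) (hM : M.IsMaximal) :
    ∀ j, IsClosed {y : X | ∃ m ∈ M, ((m : X →L[ℂ] X)) (x j) = y} :=
  stmt5_general A hA p x hc M hM
end

section
/- Let A ⊆ B(X) be an abelian algebra of operators on a Banach space X of strict multiplicity p witnessed by x₁,...,x_p, and suppose A is strongly closed. If {a_n} ⊆ A is a sequence such that a_n xⱼ converges in X for each j = 1,...,p, then there exists a₀ ∈ A such that a_n x → a₀ x for every x ∈ X. -/
/-!
Commutativity moves convergence from the generators to all of `X`: writing `z = ∑ⱼ fⱼ xⱼ`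
with `fⱼ ∈ A`, we get `aₙ z = ∑ⱼ fⱼ (aₙ xⱼ)`, which converges. By Banach–Steinhaus the
pointwise limit is a bounded operator, and it lies in `A` because `A` is strongly closed.
-/

open Filter Topology

section Commute

variable {R X : Type*} [Semiring R] [TopologicalSpace X] [AddCommMonoid X] [Module R X]
  {ι : Type*} {l : Filter ι} {a : ι → X →L[R] X}

theorem tendsto_apply_apply_of_commute {b : X →L[R] X} (hab : ∀ i, Commute (a i) b)
    {x y : X} (h : Tendsto (fun i => a i x) l (𝓝 y)) :
    Tendsto (fun i => a i (b x)) l (𝓝 (b y)) := by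
  have hswap : ∀ i, a i (b x) = b (a i x) := fun i => congrArg (· x) (hab i).eq
  simp only [hswap]
  exact (b.continuous.tendsto y).comp h

theorem tendsto_apply_sum_of_commute [ContinuousAdd X] {κ : Type*} [Fintype κ]
    {f : κ → X →L[R] X} (hf : ∀ i j, Commute (a i) (f j)) {x y : κ → X}
    (h : ∀ j, Tendsto (fun i => a i (x j)) l (𝓝 (y j))) :
    Tendsto (fun i => a i (∑ j, f j (x j))) l (𝓝 (∑ j, f j (y j))) := by
  simp only [map_sum]
  exact tendsto_finsetSum _ fun j _ => tendsto_apply_apply_of_commute (hf · j) (h j)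

end Commute

theorem exists_mem_forall_tendsto_apply {𝕜 E F : Type*} [NontriviallyNormedField 𝕜]
    [NormedAddCommGroup E] [NormedSpace 𝕜 E] [CompleteSpace E]
    [NormedAddCommGroup F] [NormedSpace 𝕜 F] {S : Set (E →L[𝕜] F)}
    (hS : ∀ T : E →L[𝕜] F, (T : E → F) ∈ closure ((fun a : E →L[𝕜] F => (a : E → F)) '' S)
      → T ∈ S)
    {a : ℕ → E →L[𝕜] F} (ha : ∀ n, a n ∈ S)
    (h : ∀ z, ∃ w, Tendsto (fun n => a n z) atTop (𝓝 w)) :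
    ∃ a₀ ∈ S, ∀ z, Tendsto (fun n => a n z) atTop (𝓝 (a₀ z)) := by
  choose g hg using h
  have hpt : Tendsto (fun n z => a n z) atTop (𝓝 g) := tendsto_pi_nhds.2 hg
  refine ⟨continuousLinearMapOfTendsto a hpt, hS _ ?_, hg⟩
  exact mem_closure_of_tendsto hpt (Eventually.of_forall fun n => ⟨a n, ha n, rfl⟩)

/-- Let `A ⊆ B(X)` be an abelian, strongly closed operator algebra of strict
multiplicity `p` witnessed by `x₁,…,x_p`. If `{a_n} ⊆ A` is a sequence such that
`a_n xⱼ` converges for each `j`, then there is `a₀ ∈ A` with `a_n x → a₀ x` for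
every `x ∈ X`. -/
theorem stmt16 {X : Type*} [NormedAddCommGroup X] [NormedSpace ℂ X] [CompleteSpace X]
    (A : Subalgebra ℂ (X →L[ℂ] X))
    (hSOT : ∀ T : X →L[ℂ] X,
      (T : X → X) ∈ closure ((fun a : X →L[ℂ] X => (a : X → X)) '' (A : Set (X →L[ℂ] X)))
      → T ∈ A)
    (hcomm : ∀ a ∈ A, ∀ b ∈ A, a * b = b * a)
    (p : ℕ) (x : Fin p → X)
    (hspan : ∀ y : X, ∃ f : Fin p → (X →L[ℂ] X), (∀ j, f j ∈ A) ∧ y = ∑ j, f j (x j))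
    (a : ℕ → (X →L[ℂ] X)) (ha : ∀ n, a n ∈ A)
    (hconv : ∀ j, ∃ y : X, Filter.Tendsto (fun n => a n (x j)) Filter.atTop (nhds y)) :
    ∃ a₀ ∈ A, ∀ z : X, Filter.Tendsto (fun n => a n z) Filter.atTop (nhds (a₀ z)) := by
  choose y hy using hconv
  refine exists_mem_forall_tendsto_apply hSOT ha fun z => ?_
  obtain ⟨f, hf, rfl⟩ := hspan z
  exact ⟨_, tendsto_apply_sum_of_commute (fun n j => hcomm _ (ha n) _ (hf j)) hy⟩
end
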